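/- For every σ ∈ {prf, stb, sem, stg} and every i ∈ {1,2,4}, the semantics σ_p^i is not I-maximal for PCAFs, even when restricted to PCAFs with transitive preferences: there exists a PCAF F with transitive preference relation and sets of claims S,T ∈ σ_p^i(F) with S ⊊ T. -/

import Mathlib

/-- A claim-augmented argumentation framework (CAF): a finite set of arguments,
an attack relation between the arguments, and a claim function assigning
a claim to each argument.  Arguments and claims are drawn from `ℕ`. -/
structure CAF where
  args : Finset ℕ
  att : Set (ℕ × ℕ)
  claim : ℕ → ℕ
  att_dom : ∀ p ∈ att, p.1 ∈ args ∧ p.2 ∈ args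

namespace CAF

/-- A CAF is well-formed if arguments with the same claim attack the same arguments. -/
def wf (F : CAF) : Prop :=
  ∀ a ∈ F.args, ∀ b ∈ F.args, F.claim a = F.claim b →
    ∀ c, ((a, c) ∈ F.att ↔ (b, c) ∈ F.att)

/-- `S` attacks the argument `b` in `F`. -/
def attacks (F : CAF) (S : Set ℕ) (b : ℕ) : Prop := ∃ a ∈ S, (a, b) ∈ F.att

/-- The argument `a` is defended by `S` in `F`. -/
def defends (F : CAF) (S : Set ℕ) (a : ℕ) : Prop :=
  ∀ b, (b, a) ∈ F.att → F.attacks S b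

/-- The range `S⊕` of `S` in `F`. -/
def range (F : CAF) (S : Set ℕ) : Set ℕ := S ∪ {b | F.attacks S b}

/-- Conflict-free sets. -/
def cf (F : CAF) (S : Set ℕ) : Prop :=
  S ⊆ ↑F.args ∧ ∀ a ∈ S, ∀ b ∈ S, (a, b) ∉ F.att

/-- Admissible sets. -/
def adm (F : CAF) (S : Set ℕ) : Prop :=
  F.cf S ∧ ∀ a ∈ S, F.defends S a

/-- Complete extensions. -/
def com (F : CAF) (S : Set ℕ) : Prop :=
  F.adm S ∧ ∀ a ∈ F.args, F.defends S a → a ∈ S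

/-- Naive extensions: ⊆-maximal conflict-free sets. -/
def naive (F : CAF) (S : Set ℕ) : Prop :=
  F.cf S ∧ ¬ ∃ T, F.cf T ∧ S ⊂ T

/-- Stable extensions. -/
def stb (F : CAF) (S : Set ℕ) : Prop :=
  F.cf S ∧ ∀ a ∈ F.args, a ∉ S → F.attacks S a

/-- Preferred extensions: ⊆-maximal admissible sets. -/
def prf (F : CAF) (S : Set ℕ) : Prop :=
  F.adm S ∧ ¬ ∃ T, F.adm T ∧ S ⊂ T

/-- Semi-stable extensions: admissible sets with ⊆-maximal range among admissible sets. -/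
def sem (F : CAF) (S : Set ℕ) : Prop :=
  F.adm S ∧ ¬ ∃ T, F.adm T ∧ F.range S ⊂ F.range T

/-- Stage extensions: conflict-free sets with ⊆-maximal range among conflict-free sets. -/
def stg (F : CAF) (S : Set ℕ) : Prop :=
  F.cf S ∧ ¬ ∃ T, F.cf T ∧ F.range S ⊂ F.range T

/-- The claim-based variant `σ_c` of a semantics `σ`. -/
def claimSem (σ : CAF → Set ℕ → Prop) (F : CAF) : Set (Set ℕ) :=
  {C | ∃ S, σ F S ∧ F.claim '' S = C}

/-- The wf-problematic part of a CAF: the pairs of arguments `(a,b)` such that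
`(a,b)` is not an attack but some argument `a'` with the same claim as `a` attacks `b`. -/
def wfp (F : CAF) : Set (ℕ × ℕ) :=
  {p | p.1 ∈ F.args ∧ p.2 ∈ F.args ∧ p ∉ F.att ∧
       ∃ a' ∈ F.args, F.claim a' = F.claim p.1 ∧ (a', p.2) ∈ F.att}

end CAF

/-- A preference-based CAF (PCAF): a well-formed CAF together with an
asymmetric preference relation over its arguments. -/
structure PCAF extends CAF where
  pref : ℕ → ℕ → Prop
  pref_dom : ∀ a b, pref a b → a ∈ args ∧ b ∈ args
  pref_asymm : ∀ a b, pref a b → ¬ pref b a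
  isWf : toCAF.wf

/-- The attack relation obtained from a PCAF by Reduction `i` (`i ∈ {1,2,3,4}`). -/
def redAtt (i : ℕ) (F : PCAF) : Set (ℕ × ℕ) :=
  if i = 1 then {p | p ∈ F.att ∧ ¬ F.pref p.2 p.1}
  else if i = 2 then
    {p | (p ∈ F.att ∧ ¬ F.pref p.2 p.1) ∨
         ((p.2, p.1) ∈ F.att ∧ p ∉ F.att ∧ F.pref p.1 p.2)}
  else if i = 3 then
    {p | (p ∈ F.att ∧ ¬ F.pref p.2 p.1) ∨ (p ∈ F.att ∧ (p.2, p.1) ∉ F.att)}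
  else if i = 4 then
    {p | (p ∈ F.att ∧ ¬ F.pref p.2 p.1) ∨
         ((p.2, p.1) ∈ F.att ∧ p ∉ F.att ∧ F.pref p.1 p.2) ∨
         (p ∈ F.att ∧ (p.2, p.1) ∉ F.att)}
  else ∅

/-- The CAF `Red_i(F)` obtained from the PCAF `F` by Reduction `i`. -/
def Red (i : ℕ) (F : PCAF) : CAF where
  args := F.args
  att := redAtt i F
  claim := F.claim
  att_dom := by
    intro p hp
    unfold redAtt at hp
    split_ifs at hp
    · simp only [Set.mem_setOf_eq] at hp
      exact F.att_dom p hp.1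
    · simp only [Set.mem_setOf_eq] at hp
      rcases hp with ⟨h, -⟩ | ⟨h, -, -⟩
      · exact F.att_dom p h
      · exact ⟨(F.att_dom _ h).2, (F.att_dom _ h).1⟩
    · simp only [Set.mem_setOf_eq] at hp
      rcases hp with ⟨h, -⟩ | ⟨h, -⟩ <;> exact F.att_dom p h
    · simp only [Set.mem_setOf_eq] at hp
      rcases hp with ⟨h, -⟩ | ⟨h, -, -⟩ | ⟨h, -⟩
      · exact F.att_dom p h
      · exact ⟨(F.att_dom _ h).2, (F.att_dom _ h).1⟩
      · exact F.att_dom p h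
    · exact absurd hp (Set.notMem_empty p)

/-- `Image_i`: the class of CAFs obtainable by applying Reduction `i` to a PCAF. -/
def ImageI (i : ℕ) : Set CAF := {F | ∃ G : PCAF, Red i G = F}

/-- `ImageTrans_i`: the class of CAFs obtainable by applying Reduction `i`
to a PCAF with a transitive preference relation. -/
def ImageTransI (i : ℕ) : Set CAF :=
  {F | ∃ G : PCAF, Transitive G.pref ∧ Red i G = F}

/-- The class of well-formed CAFs. -/
def wfCAFs : Set CAF := {F | F.wf}

/-- The preference-claim-based variant `σ_p^i` of a semantics `σ`. -/
def prefSem (σ : CAF → Set ℕ → Prop) (i : ℕ) (F : PCAF) : Set (Set ℕ) :=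
  CAF.claimSem σ (Red i F)

/-- `E_0(C)`: all arguments of `F` with a claim in `C`. -/
def E0 (F : PCAF) (C : Set ℕ) : Set ℕ := {a | a ∈ F.args ∧ F.claim a ∈ C}

/-- `E_1^i(C)`: the arguments of `E_0(C)` not attacked by `E_0(C)` in the
underlying AF of `F` (this set does not depend on `i`). -/
def E1 (F : PCAF) (C : Set ℕ) : Set ℕ :=
  E0 F C \ {b | ∃ a ∈ E0 F C, (a, b) ∈ F.att}

/-- The sequence `E_k^i(C)`. -/
def Ek (F : PCAF) (i : ℕ) (C : Set ℕ) : ℕ → Set ℕ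
  | 0 => E0 F C
  | 1 => E1 F C
  | (k + 2) => {x | x ∈ Ek F i C (k + 1) ∧ (Red i F).defends (Ek F i C (k + 1)) x}

/-- `E_*^i(C)`: the fixed point of the sequence `E_k^i(C)` (reached after at
most `|A|` steps, since the sequence is ⊆-decreasing from index 1 on). -/
def Estar (F : PCAF) (i : ℕ) (C : Set ℕ) : Set ℕ := Ek F i C (F.args.card + 2)

/-!
Every stable extension is preferred, semi-stable and stage, so it suffices to find, for each
reduction, a PCAF whose reduct has two stable extensions with strictly nested claim sets.
This is possible because the reduct of a well-formed CAF need not be well-formed: a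
preference can remove (or reverse) an attack of one argument while another argument with
the same claim keeps it, so the claim can be accepted together with the attacked argument.
-/

namespace CAF

variable {F : CAF} {S : Set ℕ}

theorem range_subset_args (hS : S ⊆ F.args) : F.range S ⊆ F.args := by
  rintro a (ha | ⟨b, -, hba⟩)
  · exact hS ha
  · exact (F.att_dom _ hba).2

theorem stb.range_eq (h : F.stb S) : F.range S = F.args :=
  (range_subset_args h.1.1).antisymm fun a ha =>
    (em (a ∈ S)).elim Or.inl fun haS => Or.inr (h.2 a ha haS)

theorem stb.adm (h : F.stb S) : F.adm S :=
  ⟨h.1, fun a ha b hba => h.2 b (F.att_dom _ hba).1 fun hb => h.1.2 b hb a ha hba⟩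

theorem stb.prf (h : F.stb S) : F.prf S := by
  refine ⟨h.adm, fun ⟨T, hT, hST⟩ => ?_⟩
  obtain ⟨t, htT, htS⟩ := Set.exists_of_ssubset hST
  obtain ⟨a, haS, hat⟩ := h.2 t (hT.1.1 htT) htS
  exact hT.1.2 a (hST.subset haS) t htT hat

theorem stb.not_range_ssubset (h : F.stb S) {T : Set ℕ} (hT : T ⊆ F.args) :
    ¬ F.range S ⊂ F.range T :=
  fun hST => hST.not_subset (h.range_eq ▸ range_subset_args hT)

theorem stb.sem (h : F.stb S) : F.sem S :=
  ⟨h.adm, fun ⟨_, hT, hST⟩ => h.not_range_ssubset hT.1.1 hST⟩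

theorem stb.stg (h : F.stb S) : F.stg S :=
  ⟨h.1, fun ⟨_, hT, hST⟩ => h.not_range_ssubset hT.1 hST⟩

theorem stb.holds_of_mem {σ : CAF → Set ℕ → Prop}
    (hσ : σ ∈ ({CAF.prf, CAF.stb, CAF.sem, CAF.stg} : Set (CAF → Set ℕ → Prop)))
    (h : F.stb S) : σ F S := by
  rcases hσ with rfl | rfl | rfl | rfl
  exacts [h.prf, h, h.sem, h.stg]

end CAF

/-- Stating the side conditions over finsets makes them decidable. -/
def PCAF.ofFinsets (args : Finset ℕ) (att : Finset (ℕ × ℕ)) (claim : ℕ → ℕ)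
    (pref : Finset (ℕ × ℕ))
    (att_dom : ∀ p ∈ att, p.1 ∈ args ∧ p.2 ∈ args)
    (pref_dom : ∀ p ∈ pref, p.1 ∈ args ∧ p.2 ∈ args)
    (pref_asymm : ∀ p ∈ pref, p.swap ∉ pref)
    (wf : ∀ a ∈ args, ∀ b ∈ args, claim a = claim b →
      ∀ c ∈ args, ((a, c) ∈ att ↔ (b, c) ∈ att)) : PCAF where
  args := args
  att := ↑att
  claim := claim
  att_dom := att_dom
  pref a b := (a, b) ∈ pref
  pref_dom a b := pref_dom (a, b)
  pref_asymm a b := pref_asymm (a, b)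
  isWf a ha b hb hab c := by
    by_cases hc : c ∈ args
    · exact wf a ha b hb hab c hc
    · exact iff_of_false (fun h => hc (att_dom _ h).2) (fun h => hc (att_dom _ h).2)

theorem PCAF.ofFinsets_pref_transitive {args att claim pref h₁ h₂ h₃ h₄}
    (h : ∀ p ∈ pref, ∀ q ∈ pref, p.2 = q.1 → (p.1, q.2) ∈ pref) :
    Transitive (PCAF.ofFinsets args att claim pref h₁ h₂ h₃ h₄).pref :=
  fun a b c hab hbc => h (a, b) hab (b, c) hbc rfl

theorem redAtt_one (F : PCAF) : redAtt 1 F = {p | p ∈ F.att ∧ ¬ F.pref p.2 p.1} := rfl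

theorem redAtt_two (F : PCAF) : redAtt 2 F = {p | (p ∈ F.att ∧ ¬ F.pref p.2 p.1) ∨
    ((p.2, p.1) ∈ F.att ∧ p ∉ F.att ∧ F.pref p.1 p.2)} := rfl

theorem redAtt_four (F : PCAF) : redAtt 4 F = {p | (p ∈ F.att ∧ ¬ F.pref p.2 p.1) ∨
    ((p.2, p.1) ∈ F.att ∧ p ∉ F.att ∧ F.pref p.1 p.2) ∨ (p ∈ F.att ∧ (p.2, p.1) ∉ F.att)} := rfl

def PCAF.HasNestedStableClaims (i : ℕ) (F : PCAF) : Prop :=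
  ∃ E₁ E₂ : Set ℕ, (Red i F).stb E₁ ∧ (Red i F).stb E₂ ∧ F.claim '' E₁ ⊂ F.claim '' E₂

theorem PCAF.HasNestedStableClaims.exists_ssubset_prefSem {i : ℕ} {F : PCAF}
    (hF : F.HasNestedStableClaims i) {σ : CAF → Set ℕ → Prop}
    (hσ : σ ∈ ({CAF.prf, CAF.stb, CAF.sem, CAF.stg} : Set (CAF → Set ℕ → Prop))) :
    ∃ S T : Set ℕ, S ∈ prefSem σ i F ∧ T ∈ prefSem σ i F ∧ S ⊂ T :=
  let ⟨E₁, E₂, h₁, h₂, hE⟩ := hF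
  ⟨_, _, ⟨E₁, h₁.holds_of_mem hσ, rfl⟩, ⟨E₂, h₂.holds_of_mem hσ, rfl⟩, hE⟩

/-- Claims `0` for arguments `0, 1` and `1` for argument `2`. The preference `2 ≻ 1` deletes
the attack `1 → 2` but not `0 → 2`, so `{0, 1}` and `{1, 2}` are both stable in `Red 1`,
with claims `{0} ⊂ {0, 1}`. -/
def witnessRed1 : PCAF :=
  .ofFinsets {0, 1, 2} {(0, 2), (1, 2), (2, 0)} (fun a => if a ≤ 1 then 0 else 1) {(2, 1)}
    (by decide) (by decide) (by decide) (by decide)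

/-- Claims `0` for `0, 1`, `1` for `2, 3`, `2` for `4` and `3` for `5`. The preferences
`2 ≻ 4` and `0 ≻ 5` make `2` attack `4` and `0` attack `5` in `Red 2` and `Red 4`, while the
attacks of `4` on `0` and of `5` on `2` survive. So `{0, 1, 2, 3}` and `{1, 3, 4, 5}` are both
stable, with claims `{0, 1} ⊂ {0, 1, 2, 3}`. -/
def witnessRed24 : PCAF :=
  .ofFinsets {0, 1, 2, 3, 4, 5} {(4, 0), (4, 2), (5, 2), (5, 0)}
    (fun a => if a ≤ 1 then 0 else if a ≤ 3 then 1 else if a = 4 then 2 else 3)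
    {(2, 4), (0, 5)} (by decide) (by decide) (by decide) (by decide)

theorem witnessRed1_pref_transitive : Transitive witnessRed1.pref :=
  PCAF.ofFinsets_pref_transitive (by decide)

theorem witnessRed24_pref_transitive : Transitive witnessRed24.pref :=
  PCAF.ofFinsets_pref_transitive (by decide)

theorem witnessRed1_hasNestedStableClaims : witnessRed1.HasNestedStableClaims 1 := by
  refine ⟨↑({0, 1} : Finset ℕ), ↑({1, 2} : Finset ℕ), ?_, ?_, ?_⟩ <;>
  simp only [CAF.stb, CAF.cf, CAF.attacks, Red, redAtt_one, witnessRed1, PCAF.ofFinsets,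
    Finset.mem_coe, Set.mem_ofPred_eq, Finset.coe_subset, ← Finset.coe_image,
    Finset.coe_ssubset] <;>
  decide

set_option synthInstance.maxSize 256 in
theorem witnessRed24_hasNestedStableClaims {i : ℕ} (hi : i = 2 ∨ i = 4) :
    witnessRed24.HasNestedStableClaims i := by
  refine ⟨↑({0, 1, 2, 3} : Finset ℕ), ↑({1, 3, 4, 5} : Finset ℕ), ?_, ?_, ?_⟩ <;>
  rcases hi with rfl | rfl <;>
  simp only [CAF.stb, CAF.cf, CAF.attacks, Red, redAtt_two, redAtt_four, witnessRed24,
    PCAF.ofFinsets, Finset.mem_coe, Set.mem_ofPred_eq, Finset.coe_subset, ← Finset.coe_image,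
    Finset.coe_ssubset] <;>
  decide

/-- For every `σ ∈ {prf, stb, sem, stg}` and every `i ∈ {1,2,4}`, the semantics
`σ_p^i` is not I-maximal for PCAFs, even for transitive preferences. -/
theorem stmt_12 :
    ∀ σ ∈ ({CAF.prf, CAF.stb, CAF.sem, CAF.stg} : Set (CAF → Set ℕ → Prop)),
      ∀ i ∈ ({1, 2, 4} : Set ℕ),
        ∃ F : PCAF, Transitive F.pref ∧
          ∃ S T : Set ℕ, S ∈ prefSem σ i F ∧ T ∈ prefSem σ i F ∧ S ⊂ T := by
  intro σ hσ i hi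
  rcases hi with rfl | hi
  · exact ⟨witnessRed1, witnessRed1_pref_transitive,
      witnessRed1_hasNestedStableClaims.exists_ssubset_prefSem hσ⟩
  · exact ⟨witnessRed24, witnessRed24_pref_transitive,
      (witnessRed24_hasNestedStableClaims hi).exists_ssubset_prefSem hσ⟩
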